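/- A topological algebra 𝐀 = (A, E) of type Ω is profinite if and only if A is a Stone space and the translation monoid M(𝐀) is relatively compact in C(A, A) with the compact-open topology. -/

import Mathlib

/-- A translation of the `Ω`-algebra `(A, E)`. -/
def IsTranslation {Ω : ℕ → Type} {A : Type} (E : ∀ n, Ω n → (Fin n → A) → A)
    (g : A → A) : Prop :=
  ∃ (n : ℕ) (ω : Ω n) (i : Fin n) (a : Fin n → A),
    g = fun x => E n ω (Function.update a i x)

/-- Membership in the translation monoid `M(𝐀)`. -/
inductive InTransMonoid {Ω : ℕ → Type} {A : Type} (E : ∀ n, Ω n → (Fin n → A) → A) :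
    (A → A) → Prop
  | id : InTransMonoid E (fun x => x)
  | comp {g f : A → A} : IsTranslation E g → InTransMonoid E f → InTransMonoid E (g ∘ f)

/-- A continuous homomorphism from the topological `Ω`-algebra `(A, E)` onto a finite
discrete topological `Ω`-algebra. -/
structure FinQuot (Ω : ℕ → Type) [∀ n, TopologicalSpace (Ω n)]
    (A : Type) [TopologicalSpace A] (E : ∀ n, Ω n → (Fin n → A) → A) where
  B : Type
  [tB : TopologicalSpace B]
  [finB : Finite B]
  [discB : DiscreteTopology B]
  op : ∀ n, Ω n → (Fin n → B) → B
  contOp : ∀ n, Continuous fun p : Ω n × (Fin n → B) => op n p.1 p.2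
  toFun : A → B
  cont : Continuous toFun
  hom : ∀ (n : ℕ) (ω : Ω n) (a : Fin n → A), toFun (E n ω a) = op n ω fun i => toFun (a i)

/-- A topological `Ω`-algebra is profinite if it is compact and residually finite. -/
def IsProfinite (Ω : ℕ → Type) [∀ n, TopologicalSpace (Ω n)]
    (A : Type) [TopologicalSpace A] (E : ∀ n, Ω n → (Fin n → A) → A) : Prop :=
  CompactSpace A ∧ ∀ x y : A, x ≠ y → ∃ q : FinQuot Ω A E, q.toFun x ≠ q.toFun y

/-!
If `𝐀` is profinite, the kernels of its continuous finite quotients separate the points of the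
compact space `A`, so every entourage of `A` contains the intersection of finitely many of them.
Hence the maps preserving all these kernels, among them all of `M(𝐀)`, form an
equicontinuous and pointwise closed family, which is compact in `C(A, A)` by Arzelà–Ascoli.

Conversely, let `M` be the closure of the translation monoid in `C(A, A)`: it is compact and
stable under precomposition with translations. Given a clopen indicator `χ : A → Bool`, the map
`a ↦ (g ↦ χ (g a))` from `A` to the discrete space `C(M, Bool)` is continuous, and its kernel is
stable under translations, hence a congruence. Its image is a finite quotient of `𝐀` that
separates any two points which `χ` separates.
-/

open Set Topology Filter Uniformity

instance ContinuousMap.discreteTopology_of_compactSpace {K D : Type*} [TopologicalSpace K]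
    [CompactSpace K] [TopologicalSpace D] [DiscreteTopology D] : DiscreteTopology C(K, D) := by
  refine discreteTopology_iff_isOpen_singleton.mpr fun f => ?_
  have hfin : (range f).Finite := (isCompact_range f.continuous).finite_of_discrete
  have hf : {f} = ⋂ d ∈ range f, {g : C(K, D) | MapsTo g (f ⁻¹' {d}) {d}} := by
    ext g
    simp only [mem_singleton_iff, mem_iInter, mem_range, forall_exists_index,
      forall_apply_eq_imp_iff, mem_ofPred_eq]
    exact ⟨by rintro rfl k k' hk; exact hk, fun h => ContinuousMap.ext fun k => h k rfl⟩
  rw [hf]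
  exact hfin.isOpen_biInter fun d _ => ContinuousMap.isOpen_setOfPred_mapsTo
    (isClosed_singleton.preimage f.continuous).isCompact (isOpen_discrete {d})

section Separating

variable {A ι : Type*} {X : ι → Type*} [∀ i, TopologicalSpace (X i)]
  [∀ i, DiscreteTopology (X i)] {f : ∀ i, A → X i}

def PreservesKernels (f : ∀ i, A → X i) (g : A → A) : Prop :=
  ∀ i a b, f i a = f i b → f i (g a) = f i (g b)

theorem exists_finset_subset_of_mem_uniformity [UniformSpace A] [CompactSpace A]
    (hf : ∀ i, Continuous (f i)) (hsep : ∀ a b, a ≠ b → ∃ i, f i a ≠ f i b)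
    {V : Set (A × A)} (hV : V ∈ 𝓤 A) :
    ∃ t : Finset ι, ∀ a b, (∀ i ∈ t, f i a = f i b) → (a, b) ∈ V := by
  have hdiag : diagonal A ⊆ interior V := by
    rwa [subset_interior_iff_mem_nhdsSet, nhdsSet_diagonal_eq_uniformity]
  have hcover : (interior V)ᶜ ⊆ ⋃ i, {z : A × A | f i z.1 ≠ f i z.2} := by
    rintro ⟨a, b⟩ hab
    obtain ⟨i, hi⟩ := hsep a b fun h => hab (hdiag (by simp [h]))
    exact mem_iUnion.mpr ⟨i, hi⟩
  obtain ⟨t, ht⟩ := isOpen_interior.isClosed_compl.isCompact.elim_finite_subcover _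
    (fun i => (isClosed_diagonal.isOpen_compl.preimage
      (((hf i).comp continuous_fst).prodMk ((hf i).comp continuous_snd)))) hcover
  refine ⟨t, fun a b hab => interior_subset (not_not.mp fun hV => ?_)⟩
  obtain ⟨i, hit, hi⟩ := mem_iUnion₂.mp (ht hV)
  exact hi (hab i hit)

theorem equicontinuous_setOf_preservesKernels [UniformSpace A] [CompactSpace A]
    (hf : ∀ i, Continuous (f i)) (hsep : ∀ a b, a ≠ b → ∃ i, f i a ≠ f i b) :
    Set.Equicontinuous {g | PreservesKernels f g} := by
  intro x V hV
  obtain ⟨t, ht⟩ := exists_finset_subset_of_mem_uniformity hf hsep hV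
  have hnear : ∀ᶠ y in 𝓝 x, ∀ i ∈ t, f i x = f i y :=
    (eventually_all_finset t).mpr fun i _ =>
      (hf i).continuousAt.eventually (isOpen_discrete {f i x} |>.mem_nhds rfl) |>.mono
        fun y hy => hy.symm
  filter_upwards [hnear] with y hy
  exact fun ⟨g, hg⟩ => ht _ _ fun i hi => hg i x y (hy i hi)

variable [TopologicalSpace A]

theorem totallySeparatedSpace_of_separating (hf : ∀ i, Continuous (f i))
    (hsep : ∀ a b, a ≠ b → ∃ i, f i a ≠ f i b) : TotallySeparatedSpace A := by
  refine totallySeparatedSpace_iff_exists_isClopen.mpr fun a b hab => ?_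
  obtain ⟨i, hi⟩ := hsep a b hab
  exact ⟨f i ⁻¹' {f i a}, (isClopen_discrete _).preimage (hf i), rfl, fun h => hi h.symm⟩

theorem PreservesKernels.continuous [CompactSpace A] (hf : ∀ i, Continuous (f i))
    (hsep : ∀ a b, a ≠ b → ∃ i, f i a ≠ f i b) {g : A → A} (hg : PreservesKernels f g) :
    Continuous g := by
  have := totallySeparatedSpace_of_separating hf hsep
  let _ : UniformSpace A := uniformSpaceOfCompactR1
  exact (equicontinuous_setOf_preservesKernels hf hsep).continuous_of_mem hg

theorem isCompact_setOf_preservesKernels [CompactSpace A] (hf : ∀ i, Continuous (f i))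
    (hsep : ∀ a b, a ≠ b → ∃ i, f i a ≠ f i b) :
    IsCompact {g : C(A, A) | PreservesKernels f g} := by
  have hclosed : IsClosed {g : A → A | PreservesKernels f g} := by
    simp only [PreservesKernels, ofPred_forall]
    refine isClosed_iInter fun i => isClosed_iInter fun a => isClosed_iInter fun b => ?_
    exact isClosed_iInter fun _ => isClosed_eq ((hf i).comp (continuous_apply a))
      ((hf i).comp (continuous_apply b))
  have := totallySeparatedSpace_of_separating hf hsep
  let _ : UniformSpace A := uniformSpaceOfCompactR1
  have heq := equicontinuous_setOf_preservesKernels hf hsep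
  refine ArzelaAscoli.isCompact_of_equicontinuous _ ?_ <|
    heq.comp fun g : {g : C(A, A) | PreservesKernels f g} =>
      (⟨g.1, g.2⟩ : {g : A → A | PreservesKernels f g})
  convert hclosed.isCompact
  ext g
  exact ⟨by rintro ⟨g, hg, rfl⟩; exact hg, fun hg => ⟨⟨g, hg.continuous hf hsep⟩, hg, rfl⟩⟩

end Separating

section Algebra

variable {Ω : ℕ → Type} {A : Type} {E : ∀ n, Ω n → (Fin n → A) → A}

theorem IsTranslation.continuous [∀ n, TopologicalSpace (Ω n)] [TopologicalSpace A]
    (hE : ∀ n, Continuous fun p : Ω n × (Fin n → A) => E n p.1 p.2) {t : A → A}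
    (ht : IsTranslation E t) : Continuous t := by
  obtain ⟨n, ω, i, a, rfl⟩ := ht
  exact (hE n).comp (continuous_const.prodMk (continuous_const.update i continuous_id))

theorem IsTranslation.map_eq_map_of_hom {B : Type*} {q : A → B} {op : ∀ n, Ω n → (Fin n → B) → B}
    (hom : ∀ n ω a, q (E n ω a) = op n ω fun i => q (a i)) {t : A → A} (ht : IsTranslation E t)
    {a b : A} (hab : q a = q b) : q (t a) = q (t b) := by
  obtain ⟨n, ω, i, v, rfl⟩ := ht
  simp only [hom, Function.apply_update (fun _ => q), hab]

theorem InTransMonoid.comp_isTranslation {f t : A → A} (hf : InTransMonoid E f)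
    (ht : IsTranslation E t) : InTransMonoid E (f ∘ t) := by
  induction hf with
  | id => exact .comp ht .id (f := fun x => x)
  | @comp g f hg _ ih => exact .comp (f := f ∘ t) hg ih

theorem InTransMonoid.map_eq_map {B : Type*} {q : A → B}
    (hq : ∀ t, IsTranslation E t → ∀ a b, q a = q b → q (t a) = q (t b)) {f : A → A}
    (hf : InTransMonoid E f) {a b : A} (hab : q a = q b) : q (f a) = q (f b) := by
  induction hf with
  | id => exact hab
  | comp hg _ ih => exact hq _ hg _ _ ih

theorem map_eq_of_forall_isTranslation {B : Type*} {q : A → B}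
    (hq : ∀ t, IsTranslation E t → ∀ a b, q a = q b → q (t a) = q (t b)) (n : ℕ) (ω : Ω n)
    {a a' : Fin n → A} (h : ∀ i, q (a i) = q (a' i)) : q (E n ω a) = q (E n ω a') := by
  suffices ∀ s : Finset (Fin n), q (E n ω a) = q (E n ω (s.piecewise a' a)) by
    simpa using this Finset.univ
  intro s
  induction s using Finset.induction_on with
  | empty => simp
  | insert i s hi ih =>
    have hs : q (s.piecewise a' a i) = q (a' i) := by
      rw [s.piecewise_eq_of_notMem _ _ hi]; exact h i
    rw [ih, Finset.piecewise_insert]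
    simpa using hq _ ⟨n, ω, i, s.piecewise a' a, rfl⟩ _ _ hs

theorem comp_mem_closure_setOf_inTransMonoid [TopologicalSpace A] {g t : C(A, A)}
    (hg : g ∈ closure {g : C(A, A) | InTransMonoid E g}) (ht : IsTranslation E t) :
    g.comp t ∈ closure {g : C(A, A) | InTransMonoid E g} :=
  map_mem_closure (f := fun g : C(A, A) => g.comp t) (ContinuousMap.continuous_precomp t) hg
    fun g (hg' : InTransMonoid E g) => hg'.comp_isTranslation ht

end Algebra

section Profinite

variable {Ω : ℕ → Type} [∀ n, TopologicalSpace (Ω n)] {A : Type} [TopologicalSpace A]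
  {E : ∀ n, Ω n → (Fin n → A) → A}

attribute [local instance] FinQuot.tB FinQuot.discB

noncomputable def FinQuot.ofKernel [CompactSpace A]
    (hE : ∀ n, Continuous fun p : Ω n × (Fin n → A) => E n p.1 p.2) {B : Type}
    [TopologicalSpace B] [DiscreteTopology B] (q : A → B) (hq : Continuous q)
    (hcong : ∀ n ω (a a' : Fin n → A), (∀ i, q (a i) = q (a' i)) → q (E n ω a) = q (E n ω a')) :
    FinQuot Ω A E where
  B := range q
  finB := (isCompact_range hq).finite_of_discrete.to_subtype
  op n ω b := rangeFactorization q (E n ω fun i => (b i).2.choose)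
  contOp n := continuous_prod_of_discrete_right.mpr fun b =>
    hq.rangeFactorization.comp ((hE n).comp (Continuous.prodMk_left fun i => (b i).2.choose))
  toFun := rangeFactorization q
  cont := hq.rangeFactorization
  hom n ω a := Subtype.ext <| hcong n ω _ _ fun i =>
    (rangeFactorization q (a i)).2.choose_spec.symm

theorem IsProfinite.totallySeparatedSpace (h : IsProfinite Ω A E) : TotallySeparatedSpace A :=
  totallySeparatedSpace_of_separating (fun q : FinQuot Ω A E => q.cont) h.2

theorem IsProfinite.exists_isCompact (h : IsProfinite Ω A E) :
    ∃ K : Set C(A, A), IsCompact K ∧ ∀ f : A → A, InTransMonoid E f → ∃ g ∈ K, ⇑g = f := by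
  obtain ⟨_, hsep⟩ := h
  refine ⟨_, isCompact_setOf_preservesKernels (fun q : FinQuot Ω A E => q.cont) hsep,
    fun f hf => ?_⟩
  have hpres : PreservesKernels (fun q : FinQuot Ω A E => q.toFun) f := fun q _ _ =>
    hf.map_eq_map fun _ ht _ _ => ht.map_eq_map_of_hom q.hom
  exact ⟨⟨f, hpres.continuous (fun q : FinQuot Ω A E => q.cont) hsep⟩, hpres, rfl⟩

def evalColoring [LocallyCompactPair A A] {D : Type} [TopologicalSpace D]
    (K : Set C(A, A)) (χ : C(A, D)) : C(A, C(K, D)) :=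
  ContinuousMap.curry ⟨fun p : A × K => χ (p.2.1 p.1), by fun_prop⟩

theorem evalColoring_map_eq_map [LocallyCompactPair A A]
    (hE : ∀ n, Continuous fun p : Ω n × (Fin n → A) => E n p.1 p.2) {D : Type}
    [TopologicalSpace D] {K : Set C(A, A)}
    (hK : ∀ g ∈ K, ∀ t : C(A, A), IsTranslation E t → g.comp t ∈ K) (χ : C(A, D))
    (t : A → A) (ht : IsTranslation E t) (a b : A)
    (hab : evalColoring K χ a = evalColoring K χ b) :
    evalColoring K χ (t a) = evalColoring K χ (t b) := by
  ext ⟨g, hg⟩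
  exact DFunLike.congr_fun hab ⟨g.comp ⟨t, ht.continuous hE⟩, hK g hg _ ht⟩

theorem isProfinite_of_isCompact [CompactSpace A] [T2Space A] [TotallyDisconnectedSpace A]
    (hE : ∀ n, Continuous fun p : Ω n × (Fin n → A) => E n p.1 p.2) {K : Set C(A, A)}
    (hK : IsCompact K) (hKM : ∀ f : A → A, InTransMonoid E f → ∃ g ∈ K, ⇑g = f) :
    IsProfinite Ω A E := by
  set M := closure {g : C(A, A) | InTransMonoid E g}
  have hMK : {g : C(A, A) | InTransMonoid E g} ⊆ K := fun g hg => by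
    obtain ⟨g', hg'K, hg'⟩ := hKM g hg
    rwa [← DFunLike.coe_injective hg']
  have : CompactSpace M := isCompact_iff_compactSpace.mp (hK.closure_of_subset hMK)
  refine ⟨inferInstance, fun x y hxy => ?_⟩
  obtain ⟨C, hC, hxC, hyC⟩ := exists_isClopen_of_totally_separated hxy
  let χ : C(A, Bool) := ⟨boolIndicator C, (continuous_boolIndicator_iff_isClopen C).mpr hC⟩
  have hM : ∀ g ∈ M, ∀ t : C(A, A), IsTranslation E t → g.comp t ∈ M :=
    fun _ hg _ ht => comp_mem_closure_setOf_inTransMonoid hg ht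
  refine ⟨FinQuot.ofKernel hE (evalColoring M χ) (evalColoring M χ).continuous
    fun n ω _ _ => map_eq_of_forall_isTranslation (evalColoring_map_eq_map hE hM χ) n ω,
    fun hq => ?_⟩
  change rangeFactorization (evalColoring M χ) x = rangeFactorization _ y at hq
  apply_fun fun b : range (evalColoring M χ) => b.1 ⟨ContinuousMap.id A, subset_closure .id⟩ at hq
  rw [mem_compl_iff] at hyC
  simp [evalColoring, χ, boolIndicator, hxC, hyC] at hq

end Profinite

/-- A topological `Ω`-algebra `𝐀 = (A, E)` is profinite iff `A` is a Stone space and the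
translation monoid `M(𝐀)` is relatively compact in `C(A, A)` with the compact-open
topology. -/
theorem statement7 (Ω : ℕ → Type) [∀ n, TopologicalSpace (Ω n)]
    (A : Type) [TopologicalSpace A] (E : ∀ n, Ω n → (Fin n → A) → A)
    (hE : ∀ n, Continuous fun p : Ω n × (Fin n → A) => E n p.1 p.2) :
    IsProfinite Ω A E ↔
      (CompactSpace A ∧ T2Space A ∧ TotallyDisconnectedSpace A ∧
        ∃ K : Set C(A, A), IsCompact K ∧
          ∀ f : A → A, InTransMonoid E f → ∃ g ∈ K, ⇑g = f) := by
  constructor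
  · intro h
    have := h.totallySeparatedSpace
    exact ⟨h.1, inferInstance, inferInstance, h.exists_isCompact⟩
  · rintro ⟨_, _, _, K, hK, hKM⟩
    exact isProfinite_of_isCompact hE hK hKM
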